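/- arXiv:2605.31076 — 2 statements merged into one kernel-verified Lean document; each statement's English description precedes it below -/
import Mathlib

section
/- Define J* : ℝ³×ℝ³ → ℝ by J*(ω,v) = (1/2)·‖t(exp(X(ω,v)))‖², where t(g) ∈ ℝ³ is the top-right 3×1 block (the translation part) of a 4×4 matrix g and ‖·‖ is the Euclidean norm. Then for every s > 0 and every r ∈ ℝ, J*(s·e₁, r·e₃) = (r²/2)·( ((1 − cos s)/s)² + (sin s / s)² ), where e₁, e₃ are the first and third standard basis vectors of ℝ³. -/
open scoped Matrix
open NormedSpace

/-- ℝ³ with the Euclidean norm. -/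
abbrev E3 := EuclideanSpace ℝ (Fin 3)

/-- The hat map: `hat ω` is the skew-symmetric matrix with `hat ω *ᵥ x = ω × x`. -/
def hat (ω : E3) : Matrix (Fin 3) (Fin 3) ℝ :=
  !![0, -ω 2, ω 1; ω 2, 0, -ω 0; -ω 1, ω 0, 0]

/-- The homogeneous 4×4 representation of the se(3) element `(ω, v)`. -/
def seX (ω v : E3) : Matrix (Fin 4) (Fin 4) ℝ :=
  Matrix.of fun i j =>
    if hi : (i : ℕ) < 3 then
      if hj : (j : ℕ) < 3 then hat ω ⟨i, hi⟩ ⟨j, hj⟩ else v ⟨i, hi⟩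
    else 0

/-- First standard basis vector of ℝ³. -/
noncomputable def e₁ : E3 := EuclideanSpace.single 0 1

/-- Third standard basis vector of ℝ³. -/
noncomputable def e₃ : E3 := EuclideanSpace.single 2 1

/-- The translation part of a 4×4 matrix: its top-right 3×1 block, as a Euclidean vector. -/
noncomputable def tPart (g : Matrix (Fin 4) (Fin 4) ℝ) : E3 :=
  (WithLp.equiv 2 (Fin 3 → ℝ)).symm fun i => g i.castSucc (Fin.last 3)

/-- The translation-distance objective `J*(ω,v) = ½‖t(exp X(ω,v))‖²`. -/
noncomputable def Jstar (ω v : E3) : ℝ := (1 / 2) * ‖tPart (exp (seX ω v))‖ ^ 2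

/-!
If `ω ⊥ v`, then `X = X(ω,v)` satisfies `X³ = -‖ω‖² X`: the rotation block is `hat ω`, whose
cube is `-‖ω‖² hat ω`, and the translation column of `X³` is `(hat ω)² v = ⟪ω,v⟫ ω - ‖ω‖² v`.
Splitting the exponential series into even and odd powers then gives the Rodrigues formula
`exp X = 1 + (sin θ / θ) X + ((1 - cos θ) / θ²) X²` with `θ = ‖ω‖`. For `ω = s e₁`, `v = r e₃`
the translation columns of `X` and `X²` are `r e₃` and `hat ω v = -s r e₂`, so
`t(exp X) = (0, -r (1 - cos s) / s, r sin s / s)`.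
-/

open scoped Nat RealInnerProductSpace

section

variable {R 𝔸 : Type*} [CommRing R] [Ring 𝔸] [Algebra R 𝔸] {A : 𝔸} {a : R}

theorem pow_two_mul_add_one_of_pow_three_eq_smul (hA : A ^ 3 = a • A) (k : ℕ) :
    A ^ (2 * k + 1) = a ^ k • A := by
  induction k with
  | zero => simp
  | succ k ih =>
    rw [show 2 * (k + 1) + 1 = 2 + (2 * k + 1) by ring, pow_add, ih, mul_smul_comm,
      ← pow_succ, hA, smul_smul, pow_succ]

theorem pow_two_mul_add_two_of_pow_three_eq_smul (hA : A ^ 3 = a • A) (k : ℕ) :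
    A ^ (2 * k + 2) = a ^ k • A ^ 2 := by
  rw [pow_succ, pow_two_mul_add_one_of_pow_three_eq_smul hA, smul_mul_assoc, ← sq]

end

theorem exp_eq_of_pow_three_eq_neg_sq_smul {𝔸 : Type*} [Ring 𝔸] [Algebra ℝ 𝔸] [TopologicalSpace 𝔸]
    [IsTopologicalRing 𝔸] [ContinuousSMul ℝ 𝔸] [T2Space 𝔸] {A : 𝔸} {c : ℝ} (hc : c ≠ 0)
    (hA : A ^ 3 = (-c ^ 2) • A) :
    exp A = 1 + (Real.sin c / c) • A + ((1 - Real.cos c) / c ^ 2) • A ^ 2 := by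
  have hodd : HasSum (fun k : ℕ => ((2 * k + 1)! : ℝ)⁻¹ • A ^ (2 * k + 1))
      ((Real.sin c / c) • A) := by
    convert ((Real.hasSum_sin c).div_const c).smul_const A using 2 with k
    rw [pow_two_mul_add_one_of_pow_three_eq_smul hA, smul_smul, neg_pow, ← pow_mul]
    congr 1
    field_simp
    rw [pow_succ]
  have heven_succ : HasSum (fun k : ℕ => ((2 * (k + 1))! : ℝ)⁻¹ • A ^ (2 * (k + 1)))
      (((1 - Real.cos c) / c ^ 2) • A ^ 2) := by
    have hcos := ((hasSum_nat_add_iff' 1).mpr (Real.hasSum_cos c)).neg.div_const (c ^ 2)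
    convert hcos.smul_const (A ^ 2) using 2 with k
    · rw [Nat.mul_add_one, pow_two_mul_add_two_of_pow_three_eq_smul hA, smul_smul, neg_pow,
        ← pow_mul]
      congr 1
      field_simp
      ring
    · simp
  have heven : HasSum (fun k : ℕ => ((2 * k)! : ℝ)⁻¹ • A ^ (2 * k))
      (1 + ((1 - Real.cos c) / c ^ 2) • A ^ 2) := by
    refine (hasSum_nat_add_iff' 1).mp ?_
    simpa using heven_succ
  rw [congrFun (exp_eq_tsum ℝ) A,
    (HasSum.even_add_odd (f := fun n ↦ (n ! : ℝ)⁻¹ • A ^ n) heven hodd).tsum_eq]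
  abel

theorem seX_eq (ω v : E3) :
    seX ω v = !![0, -ω 2, ω 1, v 0; ω 2, 0, -ω 0, v 1; -ω 1, ω 0, 0, v 2; 0, 0, 0, 0] := by
  ext i j
  fin_cases i <;> fin_cases j <;> rfl

theorem seX_pow_three_of_inner_eq_zero {ω v : E3} (h : ⟪ω, v⟫ = 0) :
    seX ω v ^ 3 = (-‖ω‖ ^ 2) • seX ω v := by
  rw [EuclideanSpace.real_norm_sq_eq, Fin.sum_univ_three, seX_eq]
  simp only [EuclideanSpace.inner_eq_star_dotProduct, dotProduct, Fin.sum_univ_three] at h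
  ext i j
  fin_cases i <;> fin_cases j <;> simp [pow_succ, Matrix.mul_apply, Fin.sum_univ_four] <;>
    first
    | ring1
    | linear_combination ω 0 * h
    | linear_combination ω 1 * h
    | linear_combination ω 2 * h

theorem exp_seX_of_inner_eq_zero {ω v : E3} (hω : ω ≠ 0) (h : ⟪ω, v⟫ = 0) :
    exp (seX ω v) = 1 + (Real.sin ‖ω‖ / ‖ω‖) • seX ω v +
      ((1 - Real.cos ‖ω‖) / ‖ω‖ ^ 2) • seX ω v ^ 2 :=
  exp_eq_of_pow_three_eq_neg_sq_smul (norm_ne_zero_iff.mpr hω) (seX_pow_three_of_inner_eq_zero h)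

theorem tPart_exp_seX_smul_e₁_smul_e₃ {s : ℝ} (hs : 0 < s) (r : ℝ) :
    tPart (exp (seX (s • e₁) (r • e₃))) =
      !₂[0, -(r * (1 - Real.cos s) / s), r * Real.sin s / s] := by
  have hinner : ⟪s • e₁, r • e₃⟫ = 0 := by
    simp [e₁, e₃, inner_smul_left, inner_smul_right, EuclideanSpace.inner_single_left]
  have hnorm : ‖s • e₁‖ = s := by simp [e₁, norm_smul, hs.le]
  rw [exp_seX_of_inner_eq_zero (by simp [e₁, hs.ne']) hinner, hnorm, seX_eq]
  ext i
  fin_cases i <;> simp [tPart, e₁, e₃, sq] <;> field_simp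

theorem stmt15 (s r : ℝ) (hs : 0 < s) :
    Jstar (s • e₁) (r • e₃) =
      r ^ 2 / 2 * (((1 - Real.cos s) / s) ^ 2 + (Real.sin s / s) ^ 2) := by
  rw [Jstar, tPart_exp_seX_smul_e₁_smul_e₃ hs, EuclideanSpace.real_norm_sq_eq, Fin.sum_univ_three]
  simp only [Matrix.cons_val_zero, Matrix.cons_val_one, Matrix.cons_val]
  ring
end

section
/- Define J* : ℝ³×ℝ³ → ℝ by J*(ω,v) = (1/2)·‖t(exp(X(ω,v)))‖², where t(g) ∈ ℝ³ is the top-right 3×1 block of the 4×4 matrix g. Fix r > 0 and let g(h) = J*((1+h)·e₁, r·e₃) for h in a neighbourhood of 0, with e₁, e₃ the first and third standard basis vectors of ℝ³. Then the second derivative of g at h = 0 equals (r²/2)·(12 − 8·sin 1 − 10·cos 1). -/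
open scoped Matrix
open NormedSpace

/-!
The se(3) generator `X((1 + h) e₁, r e₃)` is `a • Q` with `a = 1 + h` and `Q = X(e₁, (r / a) e₃)`, and
`Q³ = -Q`. For such `Q` the exponential has the closed Rodrigues form
`exp (a • Q) = 1 + sin a • Q + (1 - cos a) • Q²`, since both sides solve `C' = Q C`, `C 0 = 1`.
Reading off the translation column gives `J*(a e₁, r e₃) = r² (1 - cos a) / a²` for `a ≠ 0`,
and the claim is the second derivative of this elementary function at `a = 1`.
-/

section ExpOfCubicGenerator

variable {𝔸 : Type*} [NormedRing 𝔸] [NormedAlgebra ℝ 𝔸] [CompleteSpace 𝔸]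

theorem exp_smul_eq_of_hasDerivAt {A : 𝔸} {C : ℝ → 𝔸} (hC : ∀ t, HasDerivAt C (A * C t) t)
    (hC₀ : C 0 = 1) (t : ℝ) : exp (t • A) = C t := by
  have hinv : ∀ s : ℝ, exp (s • -A) * C s = 1 := by
    have hderiv : ∀ s : ℝ, HasDerivAt (fun s => exp (s • -A) * C s) 0 s := fun s => by
      convert (hasDerivAt_exp_smul_const' (-A) s).fun_mul (hC s) using 1
      rw [((Commute.refl (-A)).smul_right s).exp_right.eq]
      noncomm_ring
    intro s
    simpa [hC₀] using is_const_of_deriv_eq_zero (fun s => (hderiv s).differentiableAt)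
      (fun s => (hderiv s).deriv) s 0
  let +nondep : NormedAlgebra ℚ 𝔸 := .restrictScalars ℚ ℝ 𝔸
  calc exp (t • A) = exp (t • A) * (exp (t • -A) * C t) := by rw [hinv, mul_one]
    _ = C t := by
      rw [← mul_assoc, smul_neg, ← exp_add_of_commute (Commute.refl _).neg_right, add_neg_cancel,
        exp_zero, one_mul]

theorem exp_smul_of_pow_three_eq_neg {Q : 𝔸} (hQ : Q ^ 3 = -Q) (t : ℝ) :
    exp (t • Q) = 1 + Real.sin t • Q + (1 - Real.cos t) • Q ^ 2 := by
  refine exp_smul_eq_of_hasDerivAt (C := fun t => 1 + Real.sin t • Q + (1 - Real.cos t) • Q ^ 2)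
    (fun t => ?_) (by simp) t
  refine ((((Real.hasDerivAt_sin t).smul_const Q).const_add 1).fun_add
    (((Real.hasDerivAt_cos t).const_sub 1).smul_const (Q ^ 2))).congr_deriv ?_
  rw [mul_add, mul_add, mul_one, mul_smul_comm, mul_smul_comm, ← sq, ← pow_succ', hQ]
  module

end ExpOfCubicGenerator

theorem seX_smul (a : ℝ) (ω v : E3) : seX (a • ω) (a • v) = a • seX ω v := by
  ext i j
  fin_cases i <;> fin_cases j <;> simp [seX, hat]

theorem seX_e₁_smul_e₃ (s : ℝ) :
    seX e₁ (s • e₃) = !![0, 0, 0, 0; 0, 0, -1, 0; 0, 1, 0, s; 0, 0, 0, 0] := by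
  ext i j
  fin_cases i <;> fin_cases j <;> simp [seX, hat, e₁, e₃]

theorem seX_e₁_smul_e₃_pow_three (s : ℝ) : seX e₁ (s • e₃) ^ 3 = -seX e₁ (s • e₃) := by
  rw [seX_e₁_smul_e₃]
  ext i j
  fin_cases i <;> fin_cases j <;> simp [pow_succ, Matrix.mul_apply, Fin.sum_univ_four]

theorem exp_smul_seX_e₁_smul_e₃ (a s : ℝ) :
    exp (a • seX e₁ (s • e₃)) =
      1 + Real.sin a • seX e₁ (s • e₃) + (1 - Real.cos a) • seX e₁ (s • e₃) ^ 2 :=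
  -- any submultiplicative norm will do: `exp` does not depend on the choice
  letI : NormedRing (Matrix (Fin 4) (Fin 4) ℝ) := Matrix.linftyOpNormedRing
  letI : NormedAlgebra ℝ (Matrix (Fin 4) (Fin 4) ℝ) := Matrix.linftyOpNormedAlgebra
  exp_smul_of_pow_three_eq_neg (seX_e₁_smul_e₃_pow_three s) a

theorem tPart_exp_smul_seX_e₁_smul_e₃ (a s : ℝ) :
    tPart (exp (a • seX e₁ (s • e₃))) = !₂[0, -((1 - Real.cos a) * s), Real.sin a * s] := by
  rw [exp_smul_seX_e₁_smul_e₃, seX_e₁_smul_e₃]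
  ext i
  fin_cases i <;> simp [tPart, sq]

theorem Jstar_smul_e₁_smul_e₃ {a : ℝ} (ha : a ≠ 0) (r : ℝ) :
    Jstar (a • e₁) (r • e₃) = r ^ 2 * ((1 - Real.cos a) / a ^ 2) := by
  have hX : seX (a • e₁) (r • e₃) = a • seX e₁ ((r / a) • e₃) := by
    rw [← seX_smul, smul_smul, mul_div_cancel₀ _ ha]
  rw [Jstar, hX, tPart_exp_smul_seX_e₁_smul_e₃, EuclideanSpace.norm_eq,
    Real.sq_sqrt (by positivity)]
  simp only [Real.norm_eq_abs, sq_abs, Fin.sum_univ_three, Matrix.cons_val]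
  field_simp
  linear_combination r ^ 2 * Real.sin_sq_add_cos_sq a

open Real Filter Topology

theorem hasDerivAt_one_sub_cos_div_sq {x : ℝ} (hx : x ≠ 0) :
    HasDerivAt (fun x => (1 - cos x) / x ^ 2) (sin x / x ^ 2 - 2 * (1 - cos x) / x ^ 3) x := by
  refine (((hasDerivAt_cos x).const_sub 1).fun_div (hasDerivAt_pow 2 x)
    (pow_ne_zero 2 hx)).congr_deriv ?_
  norm_num
  field_simp

theorem hasDerivAt_sin_div_sq_sub_two_mul_one_sub_cos_div_cube {x : ℝ} (hx : x ≠ 0) :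
    HasDerivAt (fun x => sin x / x ^ 2 - 2 * (1 - cos x) / x ^ 3)
      (cos x / x ^ 2 - 4 * sin x / x ^ 3 + 6 * (1 - cos x) / x ^ 4) x := by
  refine (((hasDerivAt_sin x).fun_div (hasDerivAt_pow 2 x) (pow_ne_zero 2 hx)).fun_sub
    ((((hasDerivAt_cos x).const_sub 1).const_mul 2).fun_div (hasDerivAt_pow 3 x)
      (pow_ne_zero 3 hx))).congr_deriv ?_
  norm_num
  field_simp
  ring

theorem deriv_deriv_one_sub_cos_div_sq {x : ℝ} (hx : x ≠ 0) :
    deriv (deriv fun x => (1 - cos x) / x ^ 2) x =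
      cos x / x ^ 2 - 4 * sin x / x ^ 3 + 6 * (1 - cos x) / x ^ 4 := by
  have hderiv : deriv (fun x => (1 - cos x) / x ^ 2) =ᶠ[𝓝 x]
      fun x => sin x / x ^ 2 - 2 * (1 - cos x) / x ^ 3 :=
    (eventually_ne_nhds hx).mono fun y hy => (hasDerivAt_one_sub_cos_div_sq hy).deriv
  rw [hderiv.deriv_eq, (hasDerivAt_sin_div_sq_sub_two_mul_one_sub_cos_div_cube hx).deriv]

theorem stmt18_general (r : ℝ) :
    deriv (deriv fun h : ℝ => Jstar ((1 + h) • e₁) (r • e₃)) 0 =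
      r ^ 2 / 2 * (12 - 8 * Real.sin 1 - 10 * Real.cos 1) := by
  set φ : ℝ → ℝ := fun x => (1 - cos x) / x ^ 2 with hφ
  have hJ : (fun h : ℝ => Jstar ((1 + h) • e₁) (r • e₃)) =ᶠ[𝓝 0] fun h => r ^ 2 * φ (1 + h) := by
    filter_upwards [eventually_ne_nhds (by norm_num : (0 : ℝ) ≠ -1)] with h hh
    exact Jstar_smul_e₁_smul_e₃ (by contrapose! hh; linarith) r
  rw [hJ.deriv.deriv_eq]
  simp only [deriv_const_mul_field', deriv_comp_const_add, add_zero]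
  rw [hφ, deriv_deriv_one_sub_cos_div_sq one_ne_zero]
  norm_num
  ring

theorem stmt18 (r : ℝ) (hr : 0 < r) :
    deriv (deriv fun h : ℝ => Jstar ((1 + h) • e₁) (r • e₃)) 0 =
      r ^ 2 / 2 * (12 - 8 * Real.sin 1 - 10 * Real.cos 1) :=
  stmt18_general r
end
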